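/- Let f_{v,U}(x) = vᵀσ(Ux) with σ coordinatewise ReLU, α ∈ [0,1], and suppose |vᵀr| ≤ L‖r‖₂ and |v''ᵀr| ≤ L‖r‖₂ for all r ∈ ℝ^h (with some constant L > 0). Then for all U, U'' ∈ ℝ^{h×d} and x ∈ ℝ^d: |f_{αv+(1−α)v'', αU+(1−α)U''}(x) − α f_{v,U}(x) − (1−α) f_{v'',U''}(x)| ≤ 2α(1−α) L ‖(U−U'')x‖₂ ≤ (L/2)‖(U−U'')x‖₂. -/
import Mathlib


open Matrix

/-- If `|vᵀr| ≤ L‖r‖₂` and `|v''ᵀr| ≤ L‖r‖₂` for all `r`, then the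
interpolation error of the two-layer ReLU network is bounded by
`2α(1−α)L‖(U−U'')x‖₂ ≤ (L/2)‖(U−U'')x‖₂`. -/
theorem interpolation_error_bound (h d : ℕ)
    (f : (Fin h → ℝ) → Matrix (Fin h) (Fin d) ℝ → (Fin d → ℝ) → ℝ)
    (hf : ∀ v U x, f v U x = ∑ i, v i * max (U.mulVec x i) 0)
    (α : ℝ) (hα : α ∈ Set.Icc (0:ℝ) 1)
    (v v'' : Fin h → ℝ) (L : ℝ) (hL : 0 < L)
    (hv : ∀ r : Fin h → ℝ, |∑ i, v i * r i| ≤ L * Real.sqrt (∑ i, (r i) ^ 2))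
    (hv'' : ∀ r : Fin h → ℝ, |∑ i, v'' i * r i| ≤ L * Real.sqrt (∑ i, (r i) ^ 2))
    (U U'' : Matrix (Fin h) (Fin d) ℝ) (x : Fin d → ℝ) :
    |f (α • v + (1 - α) • v'') (α • U + (1 - α) • U'') x
        - α * f v U x - (1 - α) * f v'' U'' x|
      ≤ 2 * α * (1 - α) * L * Real.sqrt (∑ i, ((U - U'').mulVec x i) ^ 2) ∧
    2 * α * (1 - α) * L * Real.sqrt (∑ i, ((U - U'').mulVec x i) ^ 2)
      ≤ (L / 2) * Real.sqrt (∑ i, ((U - U'').mulVec x i) ^ 2) := by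
  obtain ⟨hα0, hα1⟩ := hα
  set a : Fin h → ℝ := U.mulVec x with ha
  set b : Fin h → ℝ := U''.mulVec x with hb
  have hc : ∀ i, (α • U + (1 - α) • U'').mulVec x i = α * a i + (1 - α) * b i := by
    intro i
    simp [Matrix.add_mulVec, Matrix.smul_mulVec, ha, hb, Pi.smul_apply, smul_eq_mul]
  have hab : ∀ i, (U - U'').mulVec x i = a i - b i := by
    intro i; simp [Matrix.sub_mulVec, ha, hb]
  set D := Real.sqrt (∑ i, ((U - U'').mulVec x i) ^ 2) with hDdef
  have hD0 : 0 ≤ D := Real.sqrt_nonneg _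
  set r : Fin h → ℝ := fun i => max (α * a i + (1 - α) * b i) 0 - max (a i) 0 with hrdef
  set r' : Fin h → ℝ := fun i => max (α * a i + (1 - α) * b i) 0 - max (b i) 0 with hr'def
  have hr : ∀ i, |r i| ≤ (1 - α) * |a i - b i| := by
    intro i
    calc |r i| ≤ |α * a i + (1 - α) * b i - a i| :=
          abs_max_sub_max_le_abs _ _ 0
      _ = (1 - α) * |a i - b i| := by
          rw [show α * a i + (1 - α) * b i - a i = -((1 - α) * (a i - b i)) by ring,
            abs_neg, abs_mul, abs_of_nonneg (by linarith)]
  have hr' : ∀ i, |r' i| ≤ α * |a i - b i| := by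
    intro i
    calc |r' i| ≤ |α * a i + (1 - α) * b i - b i| :=
          abs_max_sub_max_le_abs _ _ 0
      _ = α * |a i - b i| := by
          rw [show α * a i + (1 - α) * b i - b i = α * (a i - b i) by ring,
            abs_mul, abs_of_nonneg hα0]
  have key : ∀ (g : Fin h → ℝ) (c : ℝ), 0 ≤ c → (∀ i, |g i| ≤ c * |a i - b i|) →
      Real.sqrt (∑ i, (g i) ^ 2) ≤ c * D := by
    intro g c hc0 hg
    have h1 : ∑ i, (g i) ^ 2 ≤ c ^ 2 * ∑ i, ((U - U'').mulVec x i) ^ 2 := by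
      rw [Finset.mul_sum]
      refine Finset.sum_le_sum fun i _ => ?_
      have := hg i
      have h2 : (g i) ^ 2 ≤ (c * |a i - b i|) ^ 2 := by
        have := abs_nonneg (g i)
        nlinarith [sq_abs (g i)]
      calc (g i) ^ 2 ≤ (c * |a i - b i|) ^ 2 := h2
        _ = c ^ 2 * ((U - U'').mulVec x i) ^ 2 := by
            rw [hab i, mul_pow, sq_abs]
    calc Real.sqrt (∑ i, (g i) ^ 2)
        ≤ Real.sqrt (c ^ 2 * ∑ i, ((U - U'').mulVec x i) ^ 2) := Real.sqrt_le_sqrt h1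
      _ = c * D := by
          rw [Real.sqrt_mul (sq_nonneg _), Real.sqrt_sq hc0]
  have sqrt_r : Real.sqrt (∑ i, (r i) ^ 2) ≤ (1 - α) * D := key r (1 - α) (by linarith) hr
  have sqrt_r' : Real.sqrt (∑ i, (r' i) ^ 2) ≤ α * D := key r' α hα0 hr'
  have hdecomp : f (α • v + (1 - α) • v'') (α • U + (1 - α) • U'') x
      - α * f v U x - (1 - α) * f v'' U'' x
      = α * (∑ i, v i * r i) + (1 - α) * (∑ i, v'' i * r' i) := by
    rw [hf, hf, hf]
    simp only [Pi.add_apply, Pi.smul_apply, smul_eq_mul, hc, hrdef, hr'def]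
    rw [Finset.mul_sum, Finset.mul_sum, Finset.mul_sum, Finset.mul_sum,
      ← Finset.sum_sub_distrib, ← Finset.sum_sub_distrib, ← Finset.sum_add_distrib]
    exact Finset.sum_congr rfl fun i _ => by ring
  constructor
  · rw [hdecomp]
    have h1 := hv r
    have h2 := hv'' r'
    calc |α * (∑ i, v i * r i) + (1 - α) * (∑ i, v'' i * r' i)|
        ≤ α * |∑ i, v i * r i| + (1 - α) * |∑ i, v'' i * r' i| := by
          calc _ ≤ |α * (∑ i, v i * r i)| + |(1 - α) * (∑ i, v'' i * r' i)| := abs_add_le _ _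
            _ = _ := by
                  have hα1' : (0:ℝ) ≤ 1 - α := by linarith
                  rw [abs_mul, abs_mul, abs_of_nonneg hα0, abs_of_nonneg hα1']
      _ ≤ α * (L * ((1 - α) * D)) + (1 - α) * (L * (α * D)) := by
          have e1 : |∑ i, v i * r i| ≤ L * ((1 - α) * D) :=
            h1.trans (by nlinarith [Real.sqrt_nonneg (∑ i, (r i) ^ 2)])
          have e2 : |∑ i, v'' i * r' i| ≤ L * (α * D) :=
            h2.trans (by nlinarith [Real.sqrt_nonneg (∑ i, (r' i) ^ 2)])
          have := abs_nonneg (∑ i, v i * r i)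
          have := abs_nonneg (∑ i, v'' i * r' i)
          nlinarith
      _ = 2 * α * (1 - α) * L * D := by ring
  · nlinarith [sq_nonneg (2 * α - 1), mul_nonneg hL.le hD0]
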